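/- arXiv:1702.03836 — 2 statements merged into one kernel-verified Lean document; each statement's English description precedes it below -/
import Mathlib

section
/- For every m ≥ 1 and every unit v of ℤ̂, the element Φ_m(t^v) lies in the principal ideal generated by Φ_m(t) in ℤ̂[[t^ℤ̂]], and the unique element u ∈ ℤ̂[[t^ℤ̂]] with Φ_m(t^v) = Φ_m(t)·u is a unit of ℤ̂[[t^ℤ̂]]; in other words, the fraction Φ_m(t^v)/Φ_m(t) is defined and is a unit of ℤ̂[[t^ℤ̂]]. -/
open Polynomial

set_option synthInstance.maxHeartbeats 1000000
set_option maxHeartbeats 1000000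

noncomputable section
noncomputable section

/-- The ring of profinite integers `ẐZ = lim_n ℤ/nℤ`, realized as the subring of
`∏ n : ℕ+, ZMod n` consisting of families compatible under the natural projections. -/
def ZHatSubring : Subring (∀ n : ℕ+, ZMod n) where
  carrier := {f | ∀ (m n : ℕ+) (h : (m : ℕ) ∣ (n : ℕ)), ZMod.castHom h (ZMod m) (f n) = f m}
  mul_mem' := fun {a b} ha hb m n h => by
    simp only [Pi.mul_apply, map_mul, ha m n h, hb m n h]
  one_mem' := fun m n h => map_one _
  add_mem' := fun {a b} ha hb m n h => by
    simp only [Pi.add_apply, map_add, ha m n h, hb m n h]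
  zero_mem' := fun m n h => map_zero _
  neg_mem' := fun {a} ha m n h => by
    simp only [Pi.neg_apply, map_neg, ha m n h]

/-- The profinite integers as a type. -/
abbrev ZHat : Type := ZHatSubring

instance : CommRing ZHat := inferInstance

/-- The quotient ring `R[t]/(tⁿ - 1)`. -/
abbrev CycModN (R : Type) [CommRing R] (n : ℕ+) : Type :=
  Polynomial R ⧸ Ideal.span {(X : Polynomial R) ^ (n : ℕ) - 1}

lemma X_pow_sub_one_dvd {R : Type} [CommRing R] {m n : ℕ} (h : m ∣ n) :
    (X : Polynomial R) ^ m - 1 ∣ (X : Polynomial R) ^ n - 1 := by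
  obtain ⟨k, rfl⟩ := h
  simpa [pow_mul] using sub_dvd_pow_sub_pow ((X : Polynomial R) ^ m) 1 k

/-- The natural transition map `R[t]/(tⁿ-1) → R[t]/(tᵐ-1)` for `m ∣ n`. -/
def cycTransition (R : Type) [CommRing R] {m n : ℕ+} (h : (m : ℕ) ∣ (n : ℕ)) :
    CycModN R n →+* CycModN R m :=
  Ideal.Quotient.factor
    (Ideal.span_singleton_le_span_singleton.mpr (X_pow_sub_one_dvd h))

/-- The completed group ring `R[[t^Ẑ]] = lim_n R[t]/(tⁿ-1)`, realized as the subring of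
`∏ n : ℕ+, R[t]/(tⁿ-1)` of families compatible under the transition maps. -/
def CompletedCycRing (R : Type) [CommRing R] : Subring (∀ n : ℕ+, CycModN R n) where
  carrier := {f | ∀ (m n : ℕ+) (h : (m : ℕ) ∣ (n : ℕ)), cycTransition R h (f n) = f m}
  mul_mem' := fun {a b} ha hb m n h => by
    simp only [Pi.mul_apply, map_mul, ha m n h, hb m n h]
  one_mem' := fun m n h => map_one _
  add_mem' := fun {a b} ha hb m n h => by
    simp only [Pi.add_apply, map_add, ha m n h, hb m n h]
  zero_mem' := fun m n h => map_zero _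
  neg_mem' := fun {a} ha m n h => by
    simp only [Pi.neg_apply, map_neg, ha m n h]

instance completedCycRingCommRing (R : Type) [CommRing R] :
    CommRing (CompletedCycRing R) := inferInstance

/-- The natural ring homomorphism `R[t] → R[[t^Ẑ]]`, `f ↦ (f mod (tⁿ-1))ₙ`. -/
def polyToCompleted (R : Type) [CommRing R] : Polynomial R →+* CompletedCycRing R :=
  RingHom.codRestrict (Pi.ringHom fun n => Ideal.Quotient.mk _) _
    (fun f m n h => by
      exact Ideal.Quotient.factor_mk _ f)

/-- The natural ring homomorphism `ℤ[t] → R[[t^Ẑ]]`. -/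
def intPolyEmb (R : Type) [CommRing R] : Polynomial ℤ →+* CompletedCycRing R :=
  (polyToCompleted R).comp (Polynomial.mapRingHom (Int.castRingHom R))


/-- The image of `t` in `R[t]/(tⁿ-1)`. -/
def tGen (R : Type) [CommRing R] (n : ℕ+) : CycModN R n :=
  Ideal.Quotient.mk _ X

lemma tGen_pow_eq_one (R : Type) [CommRing R] (n : ℕ+) : (tGen R n) ^ (n : ℕ) = 1 := by
  have h : (Ideal.Quotient.mk (Ideal.span {(X : Polynomial R) ^ (n : ℕ) - 1}))
      ((X : Polynomial R) ^ (n : ℕ) - 1) = 0 :=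
    Ideal.Quotient.eq_zero_iff_mem.mpr (Ideal.subset_span rfl)
  simpa [tGen, map_sub, map_pow, sub_eq_zero] using h

lemma cycTransition_tGen (R : Type) [CommRing R] {m n : ℕ+} (h : (m : ℕ) ∣ (n : ℕ)) :
    cycTransition R h (tGen R n) = tGen R m :=
  Ideal.Quotient.factor_mk _ _

/-- For `v ∈ Ẑ` and `g ∈ ℤ[t]`, the element `g(t^v)` of `R[[t^Ẑ]]`, whose `n`-th component is
`g(t^{v_n}) mod (tⁿ-1)`, where `v ≡ v_n (mod n)`. -/
def substPow (R : Type) [CommRing R] (v : ZHat) (g : Polynomial ℤ) : CompletedCycRing R :=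
  ⟨fun n => Polynomial.aeval ((tGen R n) ^ ((v.1 n).val)) g, by
    intro m n h
    haveI : NeZero (m : ℕ) := ⟨m.ne_zero⟩
    haveI : NeZero (n : ℕ) := ⟨n.ne_zero⟩
    have hcomm : cycTransition R h (Polynomial.aeval ((tGen R n) ^ ((v.1 n).val)) g)
        = Polynomial.aeval (cycTransition R h ((tGen R n) ^ ((v.1 n).val))) g :=
      (Polynomial.aeval_algHom_apply ((cycTransition R h).toIntAlgHom) _ g).symm
    have hval : ((v.1 n).val) % (m : ℕ) = ((v.1 m).val) % (m : ℕ) := by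
      have hv := v.2 m n h
      have h2 : (v.1 m) = (((v.1 n).val : ℕ) : ZMod (m : ℕ)) := by
        rw [← hv, ZMod.castHom_apply, ← ZMod.natCast_val]
      rw [h2, ZMod.val_natCast]
      exact (Nat.mod_mod_of_dvd _ dvd_rfl).symm
    have hpow : (tGen R m) ^ ((v.1 n).val) = (tGen R m) ^ ((v.1 m).val) := by
      rw [pow_eq_pow_mod _ (tGen_pow_eq_one R m), hval,
        ← pow_eq_pow_mod _ (tGen_pow_eq_one R m)]
    rw [hcomm, map_pow, cycTransition_tGen, hpow]⟩

/-!
Let `σ_v` be the ring endomorphism `t ↦ t^v` of `Ẑ[[t^Ẑ]]`, so that `Φ(t^v) = σ_v(Φ(t))` and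
`σ_v(g(t^w)) = g(t^{vw})`. The geometric series `g_v = ∑_{0 ≤ i < v} tⁱ`, corrected at each finite
level by a multiple of the norm element `∑_{i<n} tⁱ` with coefficient the profinite quotient
`(v - r)/n`, satisfies `(t - 1)·g_v = t^v - 1`. Applying `σ_v` to the same identity for `v⁻¹` gives
`(t - 1)·g_v·σ_v(g_{v⁻¹}) = t - 1`, so `g_v` is a unit once `t - 1` is cancelled, and applying
`σ_m` shows that `t^{mv} - 1` and `t^m - 1` are associated.

Every `t^m - 1` (`m > 0`) is a non-zero-divisor: an element it kills has, at each level `k`, a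
component divisible by every integer `j` (read off at level `mjk`, where the annihilator of
`t^m - 1` is generated by `∑_{i<jk} t^{mi}`), and the free `Ẑ`-module `Ẑ[t]/(tᵏ - 1)` has no
nonzero such elements. As `t^m - 1 = ∏_{d ∣ m} Φ_d(t)`, strong induction on `m` and cancellation of
the regular factor `∏_{d ∣ m, d < m} Φ_d(t)` make `Φ_m(t)` and `Φ_m(t^v)` associated, and the
regularity of `Φ_m(t)` makes the quotient unique.
-/

theorem Associated.of_mul_right_of_isLeftRegular {M : Type*} [CommMonoid M] {a b c d : M}
    (h : Associated (a * b) (c * d)) (hbd : Associated b d) (hb : IsLeftRegular b) :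
    Associated a c := by
  obtain ⟨u, hu⟩ := h
  obtain ⟨w, rfl⟩ := hbd
  refine ⟨u * w⁻¹, hb ?_⟩
  calc b * (a * ↑(u * w⁻¹)) = a * b * u * ↑w⁻¹ := by simp only [Units.val_mul]; ac_rfl
    _ = b * c := by rw [hu, ← mul_assoc, Units.mul_inv_cancel_right, mul_comm]

theorem associated_cyclotomic_of_associated_X_pow_sub_one {R A : Type*} [CommRing R] [CommRing A]
    {ι φ : R[X] →+* A} (hreg : ∀ n, 0 < n → IsLeftRegular (ι (X ^ n - 1)))
    (h : ∀ n, 0 < n → Associated (ι (X ^ n - 1)) (φ (X ^ n - 1))) (m : ℕ) :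
    Associated (ι (cyclotomic m R)) (φ (cyclotomic m R)) := by
  induction m using Nat.strong_induction_on with
  | _ m ih =>
  rcases m.eq_zero_or_pos with rfl | hm
  · simp only [cyclotomic_zero, map_one, Associated.refl]
  have hprod := prod_cyclotomic_eq_X_pow_sub_one hm R
  rw [← Nat.cons_self_properDivisors hm.ne', Finset.prod_cons] at hprod
  set P := ∏ i ∈ m.properDivisors, cyclotomic i R
  have hP : Associated (ι P) (φ P) := by
    simp only [P, map_prod]
    exact Associated.prod _ _ _ fun d hd => ih d (Nat.mem_properDivisors.1 hd).2
  refine Associated.of_mul_right_of_isLeftRegular ?_ hP ?_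
  · simpa only [← map_mul, hprod] using h m hm
  · have hm_reg := hreg m hm
    rw [← hprod, map_mul] at hm_reg
    exact hm_reg.of_mul

namespace ZHat

theorem ext {a b : ZHat} (h : ∀ k : ℕ+, a.1 k = b.1 k) : a = b :=
  Subtype.ext (funext h)

theorem mul_apply (a b : ZHat) (k : ℕ+) : (a * b).1 k = a.1 k * b.1 k := rfl

theorem add_apply (a b : ZHat) (k : ℕ+) : (a + b).1 k = a.1 k + b.1 k := rfl

theorem zero_apply (k : ℕ+) : (0 : ZHat).1 k = 0 := rfl

theorem natCast_apply (j : ℕ) (k : ℕ+) : (j : ZHat).1 k = j :=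
  map_natCast ((Pi.evalRingHom (fun n : ℕ+ => ZMod n) k).comp ZHatSubring.subtype) j

theorem apply_of_dvd (a : ZHat) {k n : ℕ+} (h : (k : ℕ) ∣ n) : a.1 k = ((a.1 n).val : ZMod k) := by
  rw [← a.2 k n h, ZMod.castHom_apply, ZMod.natCast_val]

theorem val_apply_of_dvd (a : ZHat) {k n : ℕ+} (h : (k : ℕ) ∣ n) :
    (a.1 k).val = (a.1 n).val % k := by
  rw [apply_of_dvd a h, ZMod.val_natCast]

theorem eq_zero_of_forall_natCast_dvd (a : ZHat) (h : ∀ j : ℕ+, ((j : ℕ) : ZHat) ∣ a) : a = 0 :=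
  ext fun k => by
    obtain ⟨b, rfl⟩ := h k
    rw [mul_apply, natCast_apply, ZMod.natCast_self, zero_mul]
    rfl

theorem isRegular_natCast (n : ℕ+) : IsRegular ((n : ℕ) : ZHat) := by
  rw [← isLeftRegular_iff_isRegular, isLeftRegular_iff_right_eq_zero_of_mul]
  intro a ha
  refine ext fun k => ?_
  have hnk : (n : ℕ) * k ∣ n * (a.1 (n * k)).val := by
    have h := congrArg (fun x : ZHat => x.1 (n * k)) ha
    simp only [mul_apply, natCast_apply, zero_apply] at h
    rwa [← ZMod.natCast_zmod_val (a.1 (n * k)), ← Nat.cast_mul, ZMod.natCast_eq_zero_iff] at h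
  rw [zero_apply, apply_of_dvd a (n := n * k) (dvd_mul_left _ _), ZMod.natCast_eq_zero_iff]
  exact Nat.dvd_of_mul_dvd_mul_left n.pos hnk

def divPNat (v : ZHat) (n : ℕ+) : ZHat :=
  ⟨fun k => (((v.1 (n * k)).val / n : ℕ) : ZMod k), fun j k hjk => by
    have hnj : ((n * j : ℕ+) : ℕ) ∣ (n * k : ℕ+) := mul_dvd_mul_left (n : ℕ) hjk
    dsimp only
    rw [map_natCast, val_apply_of_dvd v hnj, PNat.mul_coe n j, Nat.mod_mul_right_div_self,
      ZMod.natCast_mod]⟩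

theorem natCast_mul_divPNat_add_val (v : ZHat) (n : ℕ+) :
    ((n : ℕ) : ZHat) * divPNat v n + (v.1 n).val = v :=
  ext fun k => by
    rw [add_apply, mul_apply, natCast_apply, natCast_apply,
      val_apply_of_dvd v (n := n * k) (dvd_mul_right _ _),
      apply_of_dvd v (n := n * k) (dvd_mul_left _ _)]
    change (n : ZMod k) * (((v.1 (n * k)).val / n : ℕ) : ZMod k) + _ = _
    rw [← Nat.cast_mul, ← Nat.cast_add, Nat.div_add_mod]

theorem divPNat_of_dvd (v : ZHat) {k n : ℕ+} (h : (k : ℕ) ∣ n) :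
    divPNat v k = (((v.1 n).val / k : ℕ) : ZHat) + ((n / k : ℕ) : ZHat) * divPNat v n := by
  refine (isRegular_natCast k).1 (add_right_cancel (b := ((v.1 k).val : ZHat)) ?_)
  change (k : ZHat) * divPNat v k + _ = (k : ZHat) * (_ + _) + _
  rw [natCast_mul_divPNat_add_val, mul_add, ← mul_assoc, ← Nat.cast_mul, ← Nat.cast_mul,
    Nat.mul_div_cancel' h, val_apply_of_dvd v h, add_right_comm, ← Nat.cast_add,
    Nat.div_add_mod, add_comm, natCast_mul_divPNat_add_val]

end ZHat

theorem geom_sum_mul_add_of_pow_eq_one {S : Type*} [Semiring S] {s : S} {N : ℕ} (hs : s ^ N = 1)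
    (q a : ℕ) :
    ∑ i ∈ Finset.range (q * N + a), s ^ i
      = q * ∑ i ∈ Finset.range N, s ^ i + ∑ i ∈ Finset.range a, s ^ i := by
  induction q with
  | zero => simp
  | succ q ih =>
    rw [show (q + 1) * N + a = N + (q * N + a) by ring, Finset.sum_range_add]
    simp only [pow_add, hs, one_mul, ih, Nat.cast_add_one, add_one_mul]
    abel

theorem geom_sum_eq_div_mul_add_of_pow_eq_one {S : Type*} [Semiring S] {s : S} {N : ℕ}
    (hs : s ^ N = 1) (c : ℕ) :
    ∑ i ∈ Finset.range c, s ^ i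
      = (c / N : ℕ) * ∑ i ∈ Finset.range N, s ^ i + ∑ i ∈ Finset.range (c % N), s ^ i := by
  conv_lhs => rw [← Nat.div_add_mod' c N]
  exact geom_sum_mul_add_of_pow_eq_one hs _ _

theorem Polynomial.monic_X_pow_sub_one {R : Type*} [CommRing R] {n : ℕ} (hn : n ≠ 0) :
    ((X : R[X]) ^ n - 1).Monic := by
  simpa using monic_X_pow_sub_C (1 : R) hn

theorem RingHom.map_aeval_int {A B : Type*} [Ring A] [Ring B] (φ : A →+* B) (x : A) (p : ℤ[X]) :
    φ (aeval x p) = aeval (φ x) p :=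
  (aeval_algHom_apply φ.toIntAlgHom x p).symm

section Levels

variable {R : Type} [CommRing R]

theorem tGen_pow_eq_pow {n : ℕ+} {k l : ℕ} (h : (k : ZMod n) = l) :
    tGen R n ^ k = tGen R n ^ l := by
  rw [ZMod.natCast_eq_natCast_iff'] at h
  rw [pow_eq_pow_mod k (tGen_pow_eq_one R n), h, ← pow_eq_pow_mod l (tGen_pow_eq_one R n)]

theorem cycTransition_mk {m n : ℕ+} (h : (m : ℕ) ∣ n) (p : R[X]) :
    cycTransition R h (Ideal.Quotient.mk _ p) = Ideal.Quotient.mk _ p :=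
  Ideal.Quotient.factor_mk _ _

theorem cycTransition_algebraMap {m n : ℕ+} (h : (m : ℕ) ∣ n) (a : R) :
    cycTransition R h (algebraMap R (CycModN R n) a) = algebraMap R (CycModN R m) a :=
  rfl

theorem CycModN.eq_zero_of_forall_natCast_dvd
    (hR : ∀ a : R, (∀ j : ℕ+, ((j : ℕ) : R) ∣ a) → a = 0) {n : ℕ+} {y : CycModN R n}
    (hy : ∀ j : ℕ+, ((j : ℕ) : CycModN R n) ∣ y) : y = 0 := by
  obtain ⟨f, rfl⟩ := Ideal.Quotient.mk_surjective y
  have hq := monic_X_pow_sub_one (R := R) n.ne_zero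
  rw [Ideal.Quotient.eq_zero_iff_mem, Ideal.mem_span_singleton, ← modByMonic_eq_zero_iff_dvd hq]
  refine Polynomial.ext fun i => hR _ fun j => ?_
  obtain ⟨z, hz⟩ := hy j
  obtain ⟨g, rfl⟩ := Ideal.Quotient.mk_surjective z
  rw [← map_natCast (Ideal.Quotient.mk _), ← map_mul, Ideal.Quotient.eq,
    Ideal.mem_span_singleton] at hz
  rw [modByMonic_eq_of_dvd_sub hq hz, ← C_eq_natCast, ← smul_eq_C_mul, smul_modByMonic,
    coeff_smul, smul_eq_mul]
  exact dvd_mul_right _ _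

end Levels

section Completed

variable {R : Type} [CommRing R]

theorem CompletedCycRing.ext {x y : CompletedCycRing R} (h : ∀ n, x.1 n = y.1 n) : x = y :=
  Subtype.ext (funext h)

theorem intPolyEmb_apply (f : ℤ[X]) (n : ℕ+) : (intPolyEmb R f).1 n = aeval (tGen R n) f := by
  let ev := (Ideal.Quotient.mk (Ideal.span {(X : R[X]) ^ (n : ℕ) - 1})).comp
    (mapRingHom (Int.castRingHom R))
  change ev f = _
  rw [← eval₂_intCastRingHom_X f ev, aeval_def,
    Subsingleton.elim (algebraMap ℤ _) (Int.castRingHom _)]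
  simp [ev, tGen]

theorem substPow_apply (v : ZHat) (f : ℤ[X]) (n : ℕ+) :
    (substPow R v f).1 n = aeval (tGen R n ^ (v.1 n).val) f := rfl

theorem substPow_one (f : ℤ[X]) : substPow R 1 f = intPolyEmb R f :=
  CompletedCycRing.ext fun n => by
    rw [substPow_apply, intPolyEmb_apply, tGen_pow_eq_pow (l := 1), pow_one]
    rw [ZMod.natCast_zmod_val, Nat.cast_one]
    rfl

theorem substPow_natCast (k : ℕ) (f : ℤ[X]) :
    substPow R k f = intPolyEmb R (f.comp (X ^ k)) :=
  CompletedCycRing.ext fun n => by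
    rw [substPow_apply, intPolyEmb_apply, aeval_comp, map_pow, aeval_X, tGen_pow_eq_pow (l := k)]
    rw [ZMod.natCast_zmod_val, ZHat.natCast_apply]

def cycSubst (R : Type) [CommRing R] (n : ℕ+) (c : ℕ) : CycModN R n →+* CycModN R n :=
  Ideal.Quotient.lift _ (eval₂RingHom ((Ideal.Quotient.mk _).comp C) (tGen R n ^ c)) fun a ha => by
    obtain ⟨b, rfl⟩ := Ideal.mem_span_singleton'.1 ha
    rw [coe_eval₂RingHom, eval₂_mul, eval₂_sub, eval₂_X_pow, eval₂_one, pow_right_comm,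
      tGen_pow_eq_one, one_pow, sub_self, mul_zero]

theorem cycSubst_tGen (n : ℕ+) (c : ℕ) : cycSubst R n c (tGen R n) = tGen R n ^ c :=
  eval₂_X _ _

theorem cycSubst_aeval (n : ℕ+) (c : ℕ) (x : CycModN R n) (f : ℤ[X]) :
    cycSubst R n c (aeval x f) = aeval (cycSubst R n c x) f :=
  RingHom.map_aeval_int _ _ _

theorem cycTransition_comp_cycSubst {m n : ℕ+} (h : (m : ℕ) ∣ n) {c c' : ℕ}
    (hc : (c : ZMod m) = c') :
    (cycTransition R h).comp (cycSubst R n c) = (cycSubst R m c').comp (cycTransition R h) := by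
  refine Ideal.Quotient.ringHom_ext (Polynomial.ringHom_ext (fun a => ?_) ?_)
  · simp only [RingHom.comp_apply, cycSubst, Ideal.Quotient.lift_mk, coe_eval₂RingHom, eval₂_C,
      cycTransition_mk]
  change cycTransition R h (cycSubst R n c (tGen R n))
    = cycSubst R m c' (cycTransition R h (tGen R n))
  rw [cycSubst_tGen, map_pow, cycTransition_tGen, cycSubst_tGen, tGen_pow_eq_pow hc]

def substEnd (R : Type) [CommRing R] (v : ZHat) : CompletedCycRing R →+* CompletedCycRing R :=
  RingHom.codRestrict
    (RingHom.pi fun n => (cycSubst R n (v.1 n).val).comp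
      ((Pi.evalRingHom _ n).comp (CompletedCycRing R).subtype)) _
    fun x m n h => by
      have hc : ((v.1 n).val : ZMod m) = (v.1 m).val := by
        rw [ZHat.val_apply_of_dvd v h, ZMod.natCast_mod]
      change cycTransition R h (cycSubst R n _ (x.1 n)) = cycSubst R m _ (x.1 m)
      rw [← RingHom.comp_apply, cycTransition_comp_cycSubst h hc, RingHom.comp_apply, x.2 m n h]

theorem substEnd_apply (v : ZHat) (x : CompletedCycRing R) (n : ℕ+) :
    (substEnd R v x).1 n = cycSubst R n (v.1 n).val (x.1 n) := rfl

theorem substEnd_intPolyEmb (v : ZHat) (f : ℤ[X]) :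
    substEnd R v (intPolyEmb R f) = substPow R v f :=
  CompletedCycRing.ext fun n => by
    rw [substEnd_apply, intPolyEmb_apply, cycSubst_aeval, cycSubst_tGen, substPow_apply]

theorem substEnd_substPow (v w : ZHat) (f : ℤ[X]) :
    substEnd R v (substPow R w f) = substPow R (v * w) f :=
  CompletedCycRing.ext fun n => by
    rw [substEnd_apply, substPow_apply, cycSubst_aeval, map_pow, cycSubst_tGen, ← pow_mul,
      substPow_apply, tGen_pow_eq_pow (l := ((v * w).1 n).val)]
    rw [Nat.cast_mul, ZMod.natCast_zmod_val, ZMod.natCast_zmod_val, ZMod.natCast_zmod_val]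
    rfl

end Completed

section Regularity

variable {R : Type} [CommRing R]

theorem intPolyEmb_X_pow_sub_one_apply (m : ℕ) (n : ℕ+) :
    (intPolyEmb R (X ^ m - 1)).1 n = tGen R n ^ m - 1 := by
  simp [intPolyEmb_apply]

theorem CycModN.exists_eq_geom_sum_mul_of_mul_eq_zero {m L : ℕ} (hm : m ≠ 0) {N : ℕ+}
    (hN : (N : ℕ) = m * L) {y : CycModN R N} (hy : (tGen R N ^ m - 1) * y = 0) :
    ∃ z, y = (∑ i ∈ Finset.range L, (tGen R N ^ m) ^ i) * z := by
  obtain ⟨f, rfl⟩ := Ideal.Quotient.mk_surjective y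
  set G : R[X] := ∑ i ∈ Finset.range L, (X ^ m) ^ i
  have hG : (X ^ m - 1) * G = X ^ (N : ℕ) - 1 := by rw [mul_geom_sum, ← pow_mul, hN]
  obtain ⟨c, hc⟩ : X ^ (N : ℕ) - 1 ∣ (X ^ m - 1) * f := by
    rw [← Ideal.mem_span_singleton, ← Ideal.Quotient.eq_zero_iff_mem, map_mul]
    simpa [tGen] using hy
  rw [← hG, mul_assoc] at hc
  refine ⟨Ideal.Quotient.mk _ c, ?_⟩
  rw [(monic_X_pow_sub_one hm).isRegular.1 hc, map_mul]
  simp [G, tGen]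

theorem isRegular_intPolyEmb_X_pow_sub_one
    (hR : ∀ a : R, (∀ j : ℕ+, ((j : ℕ) : R) ∣ a) → a = 0) {m : ℕ} (hm : m ≠ 0) :
    IsRegular (intPolyEmb R (X ^ m - 1)) := by
  rw [← isLeftRegular_iff_isRegular, isLeftRegular_iff_right_eq_zero_of_mul]
  intro x hx
  refine CompletedCycRing.ext fun k => CycModN.eq_zero_of_forall_natCast_dvd hR fun j => ?_
  let N : ℕ+ := ⟨m, Nat.pos_of_ne_zero hm⟩ * (j * k)
  have hkN : (k : ℕ) ∣ N := (dvd_mul_left (k : ℕ) j).mul_left m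
  have hxN : (tGen R N ^ m - 1) * x.1 N = 0 := by
    rw [← intPolyEmb_X_pow_sub_one_apply]
    exact congrArg (·.1 N) hx
  obtain ⟨z, hz⟩ := CycModN.exists_eq_geom_sum_mul_of_mul_eq_zero (L := j * k) hm rfl hxN
  have hk : (tGen R k ^ m) ^ (k : ℕ) = 1 := by rw [pow_right_comm, tGen_pow_eq_one, one_pow]
  refine ⟨(∑ i ∈ Finset.range k, (tGen R k ^ m) ^ i) * cycTransition R hkN z, ?_⟩
  rw [← x.2 k N hkN, hz, map_mul, map_sum]
  simp only [map_pow, cycTransition_tGen]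
  rw [geom_sum_eq_div_mul_add_of_pow_eq_one hk, Nat.mul_div_cancel _ k.pos, Nat.mul_mod_left,
    Finset.sum_range_zero, add_zero, mul_assoc]

theorem isRegular_intPolyEmb_cyclotomic
    (hR : ∀ a : R, (∀ j : ℕ+, ((j : ℕ) : R) ∣ a) → a = 0) (m : ℕ) :
    IsRegular (intPolyEmb R (cyclotomic m ℤ)) := by
  rcases eq_or_ne m 0 with rfl | hm
  · simpa using isRegular_one
  obtain ⟨P, hP⟩ := cyclotomic.dvd_X_pow_sub_one m ℤ
  have h := isRegular_intPolyEmb_X_pow_sub_one hR hm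
  rw [hP, map_mul] at h
  exact h.of_mul_left

end Regularity

/-- The element `∑_{0 ≤ i < v} tⁱ = (t^v - 1)/(t - 1)` of `Ẑ[[t^Ẑ]]`: writing `v = n q + r` with
`0 ≤ r < n`, its component at level `n` is `∑_{i<r} tⁱ + q ∑_{i<n} tⁱ`. -/
def profiniteGeomSum (v : ZHat) : CompletedCycRing ZHat :=
  ⟨fun n => ∑ i ∈ Finset.range (v.1 n).val, tGen ZHat n ^ i
      + algebraMap ZHat (CycModN ZHat n) (v.divPNat n) * ∑ i ∈ Finset.range n, tGen ZHat n ^ i,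
    fun k n h => by
      have hk := tGen_pow_eq_one ZHat k
      change cycTransition ZHat h (_ + _) = _
      rw [map_add, map_mul, map_sum, map_sum]
      simp only [map_pow, cycTransition_tGen]
      rw [geom_sum_eq_div_mul_add_of_pow_eq_one hk (v.1 n).val,
        geom_sum_eq_div_mul_add_of_pow_eq_one hk n, ← ZHat.val_apply_of_dvd v h,
        Nat.mod_eq_zero_of_dvd h, ZHat.divPNat_of_dvd v h, map_add, map_mul, map_natCast,
        map_natCast, Finset.sum_range_zero, add_zero, cycTransition_algebraMap]
      ring⟩

theorem intPolyEmb_X_sub_one_mul_profiniteGeomSum (v : ZHat) :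
    intPolyEmb ZHat (X - 1) * profiniteGeomSum v = substPow ZHat v (X - 1) :=
  CompletedCycRing.ext fun n => by
    change (intPolyEmb ZHat (X - 1)).1 n * (_ + _) = _
    rw [intPolyEmb_apply, substPow_apply]
    simp only [map_sub, aeval_X, map_one]
    rw [mul_add, mul_geom_sum, mul_left_comm, mul_geom_sum, tGen_pow_eq_one, sub_self, mul_zero,
      add_zero]

theorem associated_intPolyEmb_substPow_X_sub_one (v : ZHatˣ) :
    Associated (intPolyEmb ZHat (X - 1)) (substPow ZHat v (X - 1)) := by
  have hreg := isRegular_intPolyEmb_X_pow_sub_one ZHat.eq_zero_of_forall_natCast_dvd one_ne_zero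
  rw [pow_one] at hreg
  have hσ := congrArg (substEnd ZHat v) (intPolyEmb_X_sub_one_mul_profiniteGeomSum ↑v⁻¹)
  rw [map_mul, substEnd_intPolyEmb, substEnd_substPow, Units.mul_inv, substPow_one,
    ← intPolyEmb_X_sub_one_mul_profiniteGeomSum, mul_assoc] at hσ
  exact ⟨Units.mkOfMulEqOne _ _ (hreg.1 (hσ.trans (mul_one _).symm)),
    intPolyEmb_X_sub_one_mul_profiniteGeomSum v⟩

theorem associated_intPolyEmb_substPow_X_pow_sub_one (v : ZHatˣ) (m : ℕ) :
    Associated (intPolyEmb ZHat (X ^ m - 1)) (substPow ZHat v (X ^ m - 1)) := by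
  have hm : substPow ZHat m (X - 1) = intPolyEmb ZHat (X ^ m - 1) := by
    simp [substPow_natCast]
  have h := (associated_intPolyEmb_substPow_X_sub_one v).map (substEnd ZHat m)
  rwa [substEnd_intPolyEmb, hm, substEnd_substPow, mul_comm, ← substEnd_substPow, hm,
    substEnd_intPolyEmb] at h

theorem associated_intPolyEmb_substPow_cyclotomic (v : ZHatˣ) (m : ℕ) :
    Associated (intPolyEmb ZHat (cyclotomic m ℤ)) (substPow ZHat v (cyclotomic m ℤ)) := by
  have h := associated_cyclotomic_of_associated_X_pow_sub_one
    (φ := (substEnd ZHat v).comp (intPolyEmb ZHat))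
    (fun n hn => (isRegular_intPolyEmb_X_pow_sub_one ZHat.eq_zero_of_forall_natCast_dvd hn.ne').1)
    (fun n _ => by
      simpa only [RingHom.comp_apply, substEnd_intPolyEmb]
        using associated_intPolyEmb_substPow_X_pow_sub_one v n) m
  simpa only [RingHom.comp_apply, substEnd_intPolyEmb] using h

theorem cyclotomic_substPow_div_cyclotomic_isUnit_general (m : ℕ) (v : ZHatˣ) :
    (∃! u : CompletedCycRing ZHat,
      substPow ZHat (v : ZHat) (cyclotomic m ℤ) = intPolyEmb ZHat (cyclotomic m ℤ) * u) ∧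
    (∀ u : CompletedCycRing ZHat,
      substPow ZHat (v : ZHat) (cyclotomic m ℤ) = intPolyEmb ZHat (cyclotomic m ℤ) * u →
        IsUnit u) := by
  obtain ⟨u, hu⟩ := associated_intPolyEmb_substPow_cyclotomic v m
  have hreg := isRegular_intPolyEmb_cyclotomic ZHat.eq_zero_of_forall_natCast_dvd m
  have huniq : ∀ y, substPow ZHat v (cyclotomic m ℤ) = intPolyEmb ZHat (cyclotomic m ℤ) * y →
      y = u := fun y hy => hreg.1 (hy.symm.trans hu.symm)
  exact ⟨⟨u, hu.symm, huniq⟩, fun y hy => huniq y hy ▸ u.isUnit⟩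

/-- For every `m ≥ 1` and every unit `v` of `Ẑ`, `Φ_m(t^v)` lies in the
principal ideal `(Φ_m(t))` of `Ẑ[[t^Ẑ]]`, and the unique `u` with `Φ_m(t^v) = Φ_m(t)·u`
is a unit of `Ẑ[[t^Ẑ]]`. -/
theorem cyclotomic_substPow_div_cyclotomic_isUnit (m : ℕ) (hm : 1 ≤ m) (v : ZHatˣ) :
    (∃! u : CompletedCycRing ZHat,
      substPow ZHat (v : ZHat) (cyclotomic m ℤ) = intPolyEmb ZHat (cyclotomic m ℤ) * u) ∧
    (∀ u : CompletedCycRing ZHat,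
      substPow ZHat (v : ZHat) (cyclotomic m ℤ) = intPolyEmb ZHat (cyclotomic m ℤ) * u →
        IsUnit u) :=
  cyclotomic_substPow_div_cyclotomic_isUnit_general m v
end
end
end

section
/- Let p be a prime and m, k ≥ 1. Then the annihilator of Φ_m(t)^k in ℤ_p[[t^ℤ̂]] is contained in the principal ideal generated by Φ_m(t): every g ∈ ℤ_p[[t^ℤ̂]] with Φ_m(t)^k · g = 0 is of the form g = Φ_m(t)·h for some h ∈ ℤ_p[[t^ℤ̂]]. -/
open Polynomial

set_option synthInstance.maxHeartbeats 1000000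
set_option maxHeartbeats 1000000

noncomputable section
noncomputable section

/-! Let `f ∈ R[t]` divide `tᵐ - 1` over a domain `R`, and let `g · f = 0`. At a level `N = n·a`
with `m ∣ n`, cancelling `f` shows that `g_N` is a multiple of
`(tᴺ - 1)/f = ((tⁿ - 1)/f) · (1 + tⁿ + ⋯ + t^{n(a-1)})`, whose second factor is `a` at level `n`.
So `g_n` is divisible by every positive integer `a`. Over `ℤ_p`, taking `a = pʲ` and applying
Krull's intersection theorem to the finite free `ℤ_p`-module `ℤ_p[t]/(tⁿ - 1)` gives `g_n = 0`.
Hence `Φ_m(t)` is a non-zero-divisor of `ℤ_p[[t^Ẑ]]`, and so is `Φ_m(t)^k`: its annihilator is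
zero. -/

theorem eq_zero_of_forall_natCast_pow_dvd {R S : Type*} [CommRing R] [IsDomain R]
    [IsNoetherianRing R] [CommRing S] [Algebra R S] [Module.Finite R S]
    [Module.IsTorsionFree R S] {q : ℕ} (hq : ¬IsUnit (q : R)) {c : S}
    (hc : ∀ j : ℕ, (q : S) ^ j ∣ c) : c = 0 := by
  have hI : Ideal.span {(q : R)} ≠ ⊤ := by rwa [Ne, Ideal.span_singleton_eq_top]
  rw [← Submodule.mem_bot R, ← Ideal.iInf_pow_smul_eq_bot_of_isTorsionFree _ hI,
    Submodule.mem_iInf]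
  intro j
  obtain ⟨b, rfl⟩ := hc j
  rw [Ideal.span_singleton_pow, ← map_natCast (algebraMap R S), ← map_pow, ← Algebra.smul_def]
  exact Submodule.smul_mem_smul (Ideal.mem_span_singleton_self _) Submodule.mem_top

namespace CycModN

variable {R : Type} [CommRing R]

theorem monic_X_pow_sub_one (n : ℕ+) : ((X : R[X]) ^ (n : ℕ) - 1).Monic := by
  simpa using monic_X_pow_sub_C (1 : R) n.ne_zero

instance (n : ℕ+) : Module.Finite R (CycModN R n) := (monic_X_pow_sub_one n).finite_quotient

instance (n : ℕ+) : Module.Free R (CycModN R n) := (monic_X_pow_sub_one n).free_quotient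

theorem mk_geom_sum_X_pow (n : ℕ+) (a : ℕ) :
    (Ideal.Quotient.mk _ (∑ i ∈ Finset.range a, ((X : R[X]) ^ (n : ℕ)) ^ i) : CycModN R n) =
      a := by
  have hXn : (Ideal.Quotient.mk _ ((X : R[X]) ^ (n : ℕ)) : CycModN R n) = 1 := by
    rw [← sub_eq_zero, ← map_one (Ideal.Quotient.mk _), ← map_sub,
      Ideal.Quotient.eq_zero_iff_mem]
    exact Ideal.mem_span_singleton_self _
  simp [map_sum, hXn]

end CycModN

namespace CompletedCycRing

variable {R : Type} [CommRing R]

theorem eq_zero_of_forall_dvd {m : ℕ} (hm : 0 < m) {g : CompletedCycRing R}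
    (hg : ∀ n : ℕ+, m ∣ (n : ℕ) → g.1 n = 0) : g = 0 := by
  ext n : 2
  rw [← g.2 n (n * ⟨m, hm⟩) (dvd_mul_right _ _), hg _ (dvd_mul_left _ _), map_zero]
  rfl

theorem exists_apply_eq_natCast_mul_of_mul_eq_zero [IsDomain R] {f : R[X]}
    {g : CompletedCycRing R} (hg : g * polyToCompleted R f = 0) {n : ℕ+}
    (hfn : f ∣ X ^ (n : ℕ) - 1) (a : ℕ+) : ∃ b, g.1 n = (a : CycModN R n) * b := by
  obtain ⟨C, hC⟩ := hfn
  set σ : R[X] := ∑ i ∈ Finset.range a, ((X : R[X]) ^ (n : ℕ)) ^ i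
  have hN : (X : R[X]) ^ ((n * a : ℕ+) : ℕ) - 1 = f * (C * σ) := by
    rw [← mul_assoc, ← hC, mul_comm _ σ, geom_sum_mul, ← pow_mul, PNat.mul_coe]
  obtain ⟨x, hx⟩ := Ideal.Quotient.mk_surjective (g.1 (n * a))
  have hfx : (X : R[X]) ^ ((n * a : ℕ+) : ℕ) - 1 ∣ f * x := by
    rw [← Ideal.mem_span_singleton, ← Ideal.Quotient.eq_zero_iff_mem, mul_comm f, map_mul, hx]
    exact congrArg (fun h : CompletedCycRing R => h.1 (n * a)) hg
  have hf : f ≠ 0 := by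
    rintro rfl
    exact X_pow_sub_C_ne_zero n.pos (1 : R) (by simpa using hC)
  obtain ⟨y, rfl⟩ : C * σ ∣ x := (mul_dvd_mul_iff_left hf).mp (hN ▸ hfx)
  refine ⟨Ideal.Quotient.mk _ (C * y), ?_⟩
  rw [← g.2 n (n * a) (dvd_mul_right _ _), ← hx]
  unfold cycTransition
  rw [Ideal.Quotient.factor_mk, mul_right_comm, map_mul, map_mul, CycModN.mk_geom_sum_X_pow]
  ring

end CompletedCycRing

theorem polyToCompleted_mem_nonZeroDivisors {R : Type} [CommRing R] [IsDomain R]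
    [IsNoetherianRing R] {q : ℕ} (hq₀ : 0 < q) (hq : ¬IsUnit (q : R)) {f : R[X]} {m : ℕ}
    (hm : 0 < m) (hf : f ∣ X ^ m - 1) :
    polyToCompleted R f ∈ nonZeroDivisors (CompletedCycRing R) := by
  refine mem_nonZeroDivisors_iff_right.mpr fun g hg =>
    CompletedCycRing.eq_zero_of_forall_dvd hm fun n hmn =>
      eq_zero_of_forall_natCast_pow_dvd hq fun j => ?_
  obtain ⟨b, hb⟩ := CompletedCycRing.exists_apply_eq_natCast_mul_of_mul_eq_zero hg
    (hf.trans (X_pow_sub_one_dvd hmn)) ⟨q ^ j, pow_pos hq₀ j⟩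
  exact ⟨b, by rw [hb, PNat.mk_coe, Nat.cast_pow]⟩

theorem ann_cyclotomic_pow_le_span_cyclotomic_general
    (p : ℕ) [Fact p.Prime] (m k : ℕ) (hm : 1 ≤ m)
    (g : CompletedCycRing (PadicInt p))
    (hg : (intPolyEmb (PadicInt p) (cyclotomic m ℤ)) ^ k * g = 0) :
    ∃ h : CompletedCycRing (PadicInt p),
      g = intPolyEmb (PadicInt p) (cyclotomic m ℤ) * h := by
  have hΦ : intPolyEmb (PadicInt p) (cyclotomic m ℤ) ∈ nonZeroDivisors _ := by
    rw [intPolyEmb, RingHom.comp_apply, coe_mapRingHom, map_cyclotomic_int]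
    exact polyToCompleted_mem_nonZeroDivisors (Fact.out : p.Prime).pos
      PadicInt.prime_p.not_isUnit hm (cyclotomic.dvd_X_pow_sub_one m _)
  exact ⟨0, by rw [mul_zero, ← mul_left_mem_nonZeroDivisors_eq_zero_iff (pow_mem hΦ k), hg]⟩

/-- For a prime `p` and `m, k ≥ 1`, the annihilator of `Φ_m(t)^k` in
`ℤ_p[[t^Ẑ]]` is contained in the principal ideal `(Φ_m(t))`. -/
theorem ann_cyclotomic_pow_le_span_cyclotomic
    (p : ℕ) [Fact p.Prime] (m k : ℕ) (hm : 1 ≤ m) (hk : 1 ≤ k)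
    (g : CompletedCycRing (PadicInt p))
    (hg : (intPolyEmb (PadicInt p) (cyclotomic m ℤ)) ^ k * g = 0) :
    ∃ h : CompletedCycRing (PadicInt p),
      g = intPolyEmb (PadicInt p) (cyclotomic m ℤ) * h :=
  ann_cyclotomic_pow_le_span_cyclotomic_general p m k hm g hg
end
end
end
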